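/- Let t_1 := x_1 ⊓ (x_2 ⊔ x_3) and t_2 := x_2 ⊔ (x_1 ⊓ x_3), lattice terms over the three variables x_1, x_2, x_3. Then t_1 and t_2 are Lat-independent: for every lattice equation ε over Fin 2, if ⊨_Lat ε(t_1, t_2) then ⊨_Lat ε. -/

import Mathlib

/-- Lattice terms over variable type `α`: first-order terms in the language with exactly
two binary function symbols (meet and join). -/
inductive LatTerm (α : Type) : Type
  | var : α → LatTerm α
  | meet : LatTerm α → LatTerm α → LatTerm α
  | join : LatTerm α → LatTerm α → LatTerm α

namespace LatTerm

/-- Realization of a lattice term in a lattice `M` under a valuation `v`. -/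
def realize {α M : Type} [Lattice M] (v : α → M) : LatTerm α → M
  | var a => v a
  | meet s t => realize v s ⊓ realize v t
  | join s t => realize v s ⊔ realize v t

/-- Simultaneous substitution of lattice terms for variables. -/
def subst {α β : Type} (σ : α → LatTerm β) : LatTerm α → LatTerm β
  | var a => σ a
  | meet s t => meet (subst σ s) (subst σ t)
  | join s t => join (subst σ s) (subst σ t)

end LatTerm

/-- A lattice equation: a pair of lattice terms. -/
abbrev LatEq (α : Type) : Type := LatTerm α × LatTerm α

/-- The inequation `s ≤ t`, as the equation `s ⊓ t ≈ s`. -/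
def leEq {α : Type} (s t : LatTerm α) : LatEq α := (s.meet t, s)

/-- Lat-validity: the two terms have equal realizations in every lattice under
every valuation. -/
def LatValid {α : Type} (e : LatEq α) : Prop :=
  ∀ (M : Type) [Lattice M] (v : α → M), e.1.realize v = e.2.realize v

/-- The join, with a fixed bracketing, of `f 0, …, f m`. -/
def finJoin {α : Type} : {m : ℕ} → (Fin (m + 1) → LatTerm α) → LatTerm α
  | 0, f => f 0
  | _ + 1, f => LatTerm.join (finJoin fun k => f k.castSucc) (f (Fin.last _))

/-- The meet, with a fixed bracketing, of `f 0, …, f m`. -/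
def finMeet {α : Type} : {m : ℕ} → (Fin (m + 1) → LatTerm α) → LatTerm α
  | 0, f => f 0
  | _ + 1, f => LatTerm.meet (finMeet fun k => f k.castSucc) (f (Fin.last _))


/-- `t₁ := x₁ ⊓ (x₂ ⊔ x₃)`. -/
def t₁ : LatTerm (Fin 3) := .meet (.var 0) (.join (.var 1) (.var 2))

/-- `t₂ := x₂ ⊔ (x₁ ⊓ x₃)`. -/
def t₂ : LatTerm (Fin 3) := .join (.var 1) (.meet (.var 0) (.var 2))

/-!
Substituting `x₁ = a, x₂ = b, x₃ = c` in the diamond `M₃` (three atoms `a, b, c`) gives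
`t₁ = a ⊓ ⊤ = a` and `t₂ = b ⊔ ⊥ = b`. So an equation `ε` with `⊨ ε(t₁, t₂)` holds at `(a, b)`
in `M₃`. But `a, b` generate the four-element Boolean lattice `Bool × Bool`, which is the free
lattice on two generators; hence `ε` holds for the free generators and so in every lattice.
-/

namespace LatTerm

variable {α β M N : Type}

theorem realize_subst [Lattice M] (v : β → M) (σ : α → LatTerm β) (s : LatTerm α) :
    (s.subst σ).realize v = s.realize fun a => (σ a).realize v := by
  induction s with
  | var a => rfl
  | meet s t hs ht => simp only [subst, realize, hs, ht]
  | join s t hs ht => simp only [subst, realize, hs, ht]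

theorem realize_latticeHom_comp [Lattice M] [Lattice N] (f : LatticeHom M N) (v : α → M)
    (s : LatTerm α) : s.realize (f ∘ v) = f (s.realize v) := by
  induction s with
  | var a => rfl
  | meet s t hs ht => simp only [realize, hs, ht, map_inf]
  | join s t hs ht => simp only [realize, hs, ht, map_sup]

end LatTerm

section FreeLatticeOnTwo

variable {M : Type} [Lattice M]

/-- `Bool × Bool` is the free lattice on these two generators. -/
def twoGen : Fin 2 → Bool × Bool := ![(true, false), (false, true)]

def liftTwo (v : Fin 2 → M) : LatticeHom (Bool × Bool) M where
  toFun
    | (false, false) => v 0 ⊓ v 1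
    | (true, false) => v 0
    | (false, true) => v 1
    | (true, true) => v 0 ⊔ v 1
  map_sup' := by
    rintro ⟨_ | _, _ | _⟩ ⟨_ | _, _ | _⟩ <;> simp [Prod.sup_def, sup_comm]
  map_inf' := by
    rintro ⟨_ | _, _ | _⟩ ⟨_ | _, _ | _⟩ <;> simp [Prod.inf_def, inf_comm]

theorem liftTwo_comp_twoGen (v : Fin 2 → M) : liftTwo v ∘ twoGen = v := by
  funext i
  fin_cases i <;> rfl

theorem LatTerm.realize_eq_liftTwo (v : Fin 2 → M) (s : LatTerm (Fin 2)) :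
    s.realize v = liftTwo v (s.realize twoGen) := by
  rw [← LatTerm.realize_latticeHom_comp, liftTwo_comp_twoGen]

theorem latValid_of_realize_twoGen {e : LatEq (Fin 2)}
    (h : e.1.realize twoGen = e.2.realize twoGen) : LatValid e := by
  intro M _ v
  rw [LatTerm.realize_eq_liftTwo v e.1, LatTerm.realize_eq_liftTwo v e.2, h]

end FreeLatticeOnTwo

/-- The diamond lattice `M₃`: a bottom, three pairwise incomparable atoms and a top. -/
inductive M3 : Type
  | bot | a | b | c | top
  deriving DecidableEq

namespace M3

instance : Fintype M3 :=
  ⟨{bot, a, b, c, top}, fun x => by cases x <;> decide⟩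

def sup : M3 → M3 → M3
  | bot, x => x
  | x, bot => x
  | a, a => a
  | b, b => b
  | c, c => c
  | _, _ => top

def inf : M3 → M3 → M3
  | top, x => x
  | x, top => x
  | a, a => a
  | b, b => b
  | c, c => c
  | _, _ => bot

instance : Max M3 := ⟨sup⟩
instance : Min M3 := ⟨inf⟩

instance : Lattice M3 :=
  Lattice.mk' (by decide) (by decide) (by decide) (by decide) (by decide) (by decide)

theorem liftTwo_injective : Function.Injective (liftTwo ![a, b]) := by
  decide

end M3

theorem realize_t₁_t₂_atoms :
    (fun i => (![t₁, t₂] i).realize ![M3.a, M3.b, M3.c]) = ![M3.a, M3.b] := by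
  funext i
  fin_cases i <;> rfl

theorem stmt14 :
    ∀ e : LatEq (Fin 2),
      LatValid (e.1.subst ![t₁, t₂], e.2.subst ![t₁, t₂]) → LatValid e := by
  intro e he
  have hM3 : e.1.realize ![M3.a, M3.b] = e.2.realize ![M3.a, M3.b] := by
    simpa only [LatTerm.realize_subst, realize_t₁_t₂_atoms] using he M3 ![M3.a, M3.b, M3.c]
  apply latValid_of_realize_twoGen
  apply M3.liftTwo_injective
  rwa [← LatTerm.realize_eq_liftTwo, ← LatTerm.realize_eq_liftTwo]
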